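/- arXiv:2006.12416 — 3 statements merged into one kernel-verified Lean document; each statement's English description precedes it below -/
import Mathlib

section
/- Let p : X ⥤ C be a Grothendieck fibration such that every fiber X_c has an initial object. Then a section s : C ⥤ X of p (i.e. p ∘ s = id_C) which sends every object c to an initial object of the fiber X_c is an initial object in the category of sections of p (functors C ⥤ X over C with vertical natural transformations). -/
open CategoryTheory

universe v₁ v₂ u₁ u₂ u₃ v₃

variable {X : Type u₁} [Category.{v₁} X] {C : Type u₂} [Category.{v₂} C]

/-- A morphism `g : x ⟶ y` is cartesian for `p : X ⥤ C` if every morphism `u : w ⟶ y`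
whose image factors through `p.map g` factors uniquely through `g`, by a morphism with
prescribed image. -/
def IsCartesian (p : X ⥤ C) {x y : X} (g : x ⟶ y) : Prop :=
  ∀ ⦃w : X⦄ (u : w ⟶ y) (v : p.obj w ⟶ p.obj x),
    p.map u = v ≫ p.map g → ∃! m : w ⟶ x, p.map m = v ∧ m ≫ g = u

/-- `p : X ⥤ C` is a Grothendieck fibration if every morphism of `C` with a lift of its
codomain admits a cartesian lift. -/
def IsFibration (p : X ⥤ C) : Prop :=
  ∀ (x : X) (c : C) (f : c ⟶ p.obj x),
    ∃ (y : X) (g : y ⟶ x) (h : p.obj y = c),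
      p.map g = eqToHom h ≫ f ∧ IsCartesian p g

/-- `x` is an initial object of the fiber of `p` over `p.obj x`: every object of that
fiber receives a unique vertical morphism from `x`. -/
def FiberInitial (p : X ⥤ C) (x : X) : Prop :=
  ∀ (y : X) (h : p.obj y = p.obj x), ∃! f : x ⟶ y, p.map f = eqToHom h.symm

/-- If `p : X ⥤ C` is a Grothendieck fibration whose fibers all have initial objects,
then any section of `p` taking each object to an initial object of its fiber is an
initial object of the category of sections of `p` (sections with vertical natural
transformations): it admits a unique vertical natural transformation to any section. -/
theorem fiberwiseInitial_section_isInitial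
    (p : X ⥤ C) (hp : IsFibration p)
    (hfib : ∀ c : C, ∃ x : X, p.obj x = c ∧ FiberInitial p x)
    (s t : C ⥤ X) (hs : s ⋙ p = 𝟭 C) (ht : t ⋙ p = 𝟭 C)
    (hinit : ∀ c : C, FiberInitial p (s.obj c)) :
    ∃! τ : s ⟶ t, ∀ c : C, p.map (τ.app c) =
      eqToHom ((Functor.congr_obj hs c).trans (Functor.congr_obj ht c).symm) := by
  have key : ∀ {x y : X}, FiberInitial p x → ∀ f : p.obj x ⟶ p.obj y,
      ∃! u : x ⟶ y, p.map u = f := by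
    intro x y hx f
    obtain ⟨z, g, h, hg, hcart⟩ := hp y (p.obj x) f
    obtain ⟨m, hm, hmu⟩ := hx z h
    refine ⟨m ≫ g, by simp [hg, hm], ?_⟩
    intro u' hu'
    obtain ⟨m', ⟨hm'1, hm'2⟩, -⟩ := hcart u' (eqToHom h.symm) (by simp [hg, hu'])
    rw [← hm'2, hmu m' hm'1]
  choose app happ huniq using fun c =>
    key (hinit c) (eqToHom ((Functor.congr_obj hs c).trans (Functor.congr_obj ht c).symm))
  have hnat : ∀ {c c' : C} (f : c ⟶ c'), app c ≫ t.map f = s.map f ≫ app c' := by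
    intro c c' f
    have h1 := Functor.congr_hom hs f
    have h2 := Functor.congr_hom ht f
    simp only [Functor.comp_map, Functor.id_map] at h1 h2
    obtain ⟨u, hu, huu⟩ := key (hinit c) (p.map (app c) ≫ p.map (t.map f))
    have e1 := huu (app c ≫ t.map f) (by simp)
    have e2 := huu (s.map f ≫ app c') ?_
    · rw [e1, e2]
    · show p.map _ = _
      rw [p.map_comp, happ, happ, h1, h2]
      simp
  refine ⟨⟨app, fun {c c'} f => (hnat f).symm⟩, fun c => happ c, ?_⟩
  intro τ' hτ'
  ext c
  exact huniq c (τ'.app c) (hτ' c)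
end

section
/- Quillen's Theorem A for localizations (1-categorical version): let f : C ⥤ D be a functor of categories equipped with wide subcategories (markings) W_C ⊆ C and W_D ⊆ D containing all identities, with f(W_C) ⊆ W_D. Equip each comma category d ↓ f with the marking of morphisms whose C-component lies in W_C, and d ↓ D = d/D with the marking induced by W_D. If for every object d ∈ D the canonical functor d ↓ f → d/D induces an equivalence on localizations L_{W}(d ↓ f) → L_{W}(d/D), then the induced functor on localizations L_{W_C}(C) → L_{W_D}(D) is an equivalence of categories. -/
open CategoryTheory

universe v₁ v₂ u₁ u₂

variable {C : Type u₁} [Category.{v₁} C] {D : Type u₂} [Category.{v₂} D]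

/-- The marking on the comma category `d ↓ f` induced by a marking of `C`. -/
def sliceMark (W : MorphismProperty C) (f : C ⥤ D) (d : D) :
    MorphismProperty (StructuredArrow d f) :=
  fun _ _ φ => W φ.right

/-- The marking on the coslice `d/D` induced by a marking of `D`. -/
def underMark (W : MorphismProperty D) (d : D) : MorphismProperty (Under d) :=
  fun _ _ φ => W φ.right

/-- The canonical functor `d ↓ f ⥤ d/D`, `(c, g : d ⟶ f c) ↦ g`. -/
@[simps]
def sliceFunctor (f : C ⥤ D) (d : D) : StructuredArrow d f ⥤ Under d where
  obj g := Under.mk g.hom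
  map φ := Under.homMk (f.map φ.right) (StructuredArrow.w φ)

theorem sliceFunctor_inverts (f : C ⥤ D) (W_C : MorphismProperty C)
    (W_D : MorphismProperty D)
    (hf : ∀ {a b : C} (g : a ⟶ b), W_C g → W_D (f.map g)) (d : D) :
    (sliceMark W_C f d).IsInvertedBy (sliceFunctor f d ⋙ (underMark W_D d).Q) :=
  fun _ _ φ hφ =>
    Localization.inverts (underMark W_D d).Q (underMark W_D d)
      ((sliceFunctor f d).map φ) (hf φ.right hφ)

theorem comp_Q_inverts (f : C ⥤ D) (W_C : MorphismProperty C)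
    (W_D : MorphismProperty D)
    (hf : ∀ {a b : C} (g : a ⟶ b), W_C g → W_D (f.map g)) :
    W_C.IsInvertedBy (f ⋙ W_D.Q) :=
  fun _ _ g hg => Localization.inverts W_D.Q W_D (f.map g) (hf g hg)

/-!
Let `Γ_d : d/D ⥤ L C` (`underLift`) be the inverse of `T_d : L(d ↓ f) ⥤ L(d/D)` followed by the
localized projection `L(d ↓ f) ⥤ L C`. Since `T_d` is an equivalence, a functor out of `d/D`
inverting the marking is determined, up to unique isomorphism, by its restriction along
`d ↓ f ⥤ d/D`. For `u : d ⟶ d'`, both `u^* ⋙ Γ_d` and `Γ_{d'}` restrict to the projection to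
`L C`; this gives isomorphisms `u^* ⋙ Γ_d ≅ Γ_{d'}` satisfying the unit and cocycle conditions,
hence a functor `K : D ⥤ L C` (`inverse`), `d ↦ Γ_d (𝟙 d)`, which inverts `W_D`. Its lift to `L D`
is inverse to `L f`: evaluation at `(c, 𝟙 (f c))` gives `f ⋙ K ≅ Q_C`, and evaluation at `𝟙 d` of
`Γ_d ⋙ L f ≅ forget ⋙ Q_D`, again obtained by restriction to `d ↓ f`, gives `K ⋙ L f ≅ Q_D`.
-/

namespace MarkedQuillenA

open Functor

section Restriction

variable {A B L₁ L₂ E : Type*} [Category A] [Category B] [Category L₁] [Category L₂] [Category E]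
  {Q₁ : A ⥤ L₁} {Q₂ : B ⥤ L₂} {S : A ⥤ B} {T : L₁ ⥤ L₂} [T.IsEquivalence]

variable (E) in
/-- Up to the equivalence `(L₂ ⥤ E) ≌ W₂.FunctorsInverting E`, this functor is whiskering with
the equivalence `T` followed by whiskering with the localization functor `Q₁`. -/
noncomputable def fullyFaithfulRestrict (W₁ : MorphismProperty A) [Q₁.IsLocalization W₁]
    (W₂ : MorphismProperty B) [Q₂.IsLocalization W₂] (e : Q₁ ⋙ T ≅ S ⋙ Q₂) :
    (ObjectProperty.ι _ ⋙ (whiskeringLeft A B E).obj S :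
      W₂.FunctorsInverting E ⥤ A ⥤ E).FullyFaithful := by
  let Φ := Localization.functorEquivalence Q₂ W₂ E
  have : (Φ.functor ⋙ ObjectProperty.ι _ ⋙ (whiskeringLeft A B E).obj S).FullyFaithful :=
    ((FullyFaithful.ofFullyFaithful ((whiskeringLeft _ _ E).obj T)).comp
      (FullyFaithful.ofFullyFaithful (Localization.whiskeringLeftFunctor' Q₁ W₁ E))).ofIso
        ((whiskeringLeft A L₂ E).mapIso e)
  exact ((FullyFaithful.ofFullyFaithful Φ.inverse).comp this).ofIso (Φ.invFunIdAssoc _)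

variable {W₂ : MorphismProperty B} [Q₂.IsLocalization W₂] {P₁ P₂ : B ⥤ E}

theorem natTrans_ext_of_restrict (W₁ : MorphismProperty A) [Q₁.IsLocalization W₁]
    (e : Q₁ ⋙ T ≅ S ⋙ Q₂) (h₁ : W₂.IsInvertedBy P₁) (h₂ : W₂.IsInvertedBy P₂) {τ₁ τ₂ : P₁ ⟶ P₂}
    (h : ∀ a, τ₁.app (S.obj a) = τ₂.app (S.obj a)) : τ₁ = τ₂ :=
  congrArg InducedCategory.Hom.hom <|
    (fullyFaithfulRestrict E W₁ W₂ e).map_injective (X := ⟨P₁, h₁⟩) (Y := ⟨P₂, h₂⟩)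
      (f := ⟨τ₁⟩) (g := ⟨τ₂⟩) (NatTrans.ext (funext h))

noncomputable def extendIso (W₁ : MorphismProperty A) [Q₁.IsLocalization W₁]
    (e : Q₁ ⋙ T ≅ S ⋙ Q₂) (h₁ : W₂.IsInvertedBy P₁) (h₂ : W₂.IsInvertedBy P₂)
    (e' : S ⋙ P₁ ≅ S ⋙ P₂) : P₁ ≅ P₂ :=
  (ObjectProperty.ι _).mapIso
    ((fullyFaithfulRestrict E W₁ W₂ e).preimageIso (X := ⟨P₁, h₁⟩) (Y := ⟨P₂, h₂⟩) e')

theorem extendIso_hom_app (W₁ : MorphismProperty A) [Q₁.IsLocalization W₁]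
    (e : Q₁ ⋙ T ≅ S ⋙ Q₂) (h₁ : W₂.IsInvertedBy P₁) (h₂ : W₂.IsInvertedBy P₂)
    (e' : S ⋙ P₁ ≅ S ⋙ P₂) (a : A) :
    (extendIso W₁ e h₁ h₂ e').hom.app (S.obj a) = e'.hom.app a :=
  congr_app ((fullyFaithfulRestrict E W₁ W₂ e).map_preimage (X := ⟨P₁, h₁⟩) (Y := ⟨P₂, h₂⟩)
    e'.hom) a

end Restriction

variable {f : C ⥤ D} {W_C : MorphismProperty C} {W_D : MorphismProperty D}
  (hf : ∀ {a b : C} (g : a ⟶ b), W_C g → W_D (f.map g))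

noncomputable abbrev sliceLocalized (d : D) :
    (sliceMark W_C f d).Localization ⥤ (underMark W_D d).Localization :=
  Localization.lift (sliceFunctor f d ⋙ (underMark W_D d).Q)
    (sliceFunctor_inverts f W_C W_D hf d) (sliceMark W_C f d).Q

noncomputable abbrev localized : W_C.Localization ⥤ W_D.Localization :=
  Localization.lift (f ⋙ W_D.Q) (comp_Q_inverts f W_C W_D hf) W_C.Q

variable (f W_C) in
noncomputable def projLocalized (d : D) : (sliceMark W_C f d).Localization ⥤ W_C.Localization :=
  Localization.lift (W := sliceMark W_C f d) (StructuredArrow.proj d f ⋙ W_C.Q)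
    (fun _ _ φ hφ => Localization.inverts W_C.Q W_C φ.right hφ) (sliceMark W_C f d).Q

variable [∀ d, (sliceLocalized hf d).IsEquivalence]

noncomputable def underLift (d : D) : Under d ⥤ W_C.Localization :=
  (underMark W_D d).Q ⋙ (sliceLocalized hf d).inv ⋙ projLocalized f W_C d

theorem underLift_inverts (d : D) : (underMark W_D d).IsInvertedBy (underLift hf d) :=
  MorphismProperty.IsInvertedBy.of_comp _ _ (Localization.inverts _ _) _

noncomputable def sliceFunctorCompUnderLiftIso (d : D) :
    sliceFunctor f d ⋙ underLift hf d ≅ StructuredArrow.proj d f ⋙ W_C.Q :=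
  calc sliceFunctor f d ⋙ underLift hf d
      ≅ (sliceMark W_C f d).Q ⋙ sliceLocalized hf d ⋙ (sliceLocalized hf d).inv ⋙
          projLocalized f W_C d :=
        isoWhiskerRight (Localization.fac _ (sliceFunctor_inverts f W_C W_D hf d) _).symm
          ((sliceLocalized hf d).inv ⋙ projLocalized f W_C d)
    _ ≅ (sliceMark W_C f d).Q ⋙ projLocalized f W_C d :=
      isoWhiskerLeft _ ((sliceLocalized hf d).asEquivalence.funInvIdAssoc _)
    _ ≅ StructuredArrow.proj d f ⋙ W_C.Q := Localization.fac _ _ _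

theorem map_comp_underLift_inverts {d d' : D} (u : d ⟶ d') :
    (underMark W_D d').IsInvertedBy (Under.map u ⋙ underLift hf d) :=
  fun _ _ φ hφ => underLift_inverts hf d ((Under.map u).map φ) hφ

noncomputable def mapCompUnderLiftIso {d d' : D} (u : d ⟶ d') :
    Under.map u ⋙ underLift hf d ≅ underLift hf d' :=
  extendIso (sliceMark W_C f d')
    (Localization.fac _ (sliceFunctor_inverts f W_C W_D hf d') (sliceMark W_C f d').Q)
    (map_comp_underLift_inverts hf u) (underLift_inverts hf d')
    (isoWhiskerLeft (StructuredArrow.map u) (sliceFunctorCompUnderLiftIso hf d) ≪≫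
      (sliceFunctorCompUnderLiftIso hf d').symm)

theorem mapCompUnderLiftIso_hom_app {d d' : D} (u : d ⟶ d') (x : StructuredArrow d' f) :
    (mapCompUnderLiftIso hf u).hom.app ((sliceFunctor f d').obj x) =
      (sliceFunctorCompUnderLiftIso hf d).hom.app ((StructuredArrow.map u).obj x) ≫
        (sliceFunctorCompUnderLiftIso hf d').inv.app x := by
  rw [mapCompUnderLiftIso, extendIso_hom_app]
  rfl

-- The unit and cocycle laws are checked on `d ↓ f`, where they reduce to naturality of
-- `sliceFunctorCompUnderLiftIso` at a morphism whose image in `C` is an identity.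
theorem mapCompUnderLiftIso_hom_id (d : D) :
    (mapCompUnderLiftIso hf (𝟙 d)).hom = whiskerRight (Under.mapId d).hom (underLift hf d) := by
  apply natTrans_ext_of_restrict (sliceMark W_C f d)
    (Localization.fac _ (sliceFunctor_inverts f W_C W_D hf d) (sliceMark W_C f d).Q)
    (map_comp_underLift_inverts hf (𝟙 d)) (underLift_inverts hf d)
  intro x
  rw [mapCompUnderLiftIso_hom_app]
  let ψ : (StructuredArrow.map (𝟙 d)).obj x ⟶ x := StructuredArrow.homMk (𝟙 x.right)
  have hψ : (StructuredArrow.proj d f ⋙ W_C.Q).map ψ = 𝟙 _ := W_C.Q.map_id _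
  have := (sliceFunctorCompUnderLiftIso hf d).hom.naturality ψ
  rw [hψ] at this
  erw [Category.comp_id] at this
  rw [← this]
  erw [Category.assoc, Iso.hom_inv_id_app, Category.comp_id]
  exact congrArg (underLift hf d).map (by ext; exact f.map_id _)

theorem mapCompUnderLiftIso_hom_comp {d d' d'' : D} (u : d ⟶ d') (u' : d' ⟶ d'') :
    whiskerLeft (Under.map u') (mapCompUnderLiftIso hf u).hom ≫ (mapCompUnderLiftIso hf u').hom =
      whiskerRight (Under.mapComp u u').inv (underLift hf d) ≫
        (mapCompUnderLiftIso hf (u ≫ u')).hom := by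
  apply natTrans_ext_of_restrict (W₂ := underMark W_D d'') (sliceMark W_C f d'')
    (Localization.fac _ (sliceFunctor_inverts f W_C W_D hf d'') (sliceMark W_C f d'').Q)
    (fun _ _ φ hφ => map_comp_underLift_inverts hf u ((Under.map u').map φ) hφ)
    (underLift_inverts hf d'')
  intro x
  simp only [NatTrans.comp_app, whiskerLeft_app, whiskerRight_app]
  erw [mapCompUnderLiftIso_hom_app, mapCompUnderLiftIso_hom_app,
    mapCompUnderLiftIso_hom_app hf u ((StructuredArrow.map u').obj x)]
  let ψ : (StructuredArrow.map u).obj ((StructuredArrow.map u').obj x) ⟶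
      (StructuredArrow.map (u ≫ u')).obj x := StructuredArrow.homMk (𝟙 x.right)
  have hψ : (StructuredArrow.proj d f ⋙ W_C.Q).map ψ = 𝟙 _ := W_C.Q.map_id _
  have := (sliceFunctorCompUnderLiftIso hf d).hom.naturality ψ
  rw [hψ] at this
  erw [Category.comp_id] at this
  erw [Category.assoc, Iso.inv_hom_id_app_assoc, ← reassoc_of% this]
  exact congrArg (· ≫ _) (congrArg (underLift hf d).map (by ext; simp [ψ]; rfl))

noncomputable def inverseMap {d d' : D} (u : d ⟶ d') :
    (underLift hf d).obj (Under.mk (𝟙 d)) ⟶ (underLift hf d').obj (Under.mk (𝟙 d')) :=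
  (underLift hf d).map (Under.homMk u : Under.mk (𝟙 d) ⟶ (Under.map u).obj (Under.mk (𝟙 d'))) ≫
    (mapCompUnderLiftIso hf u).hom.app (Under.mk (𝟙 d'))

theorem inverseMap_id (d : D) : inverseMap hf (𝟙 d) = 𝟙 _ := by
  rw [inverseMap, congr_app (mapCompUnderLiftIso_hom_id hf d), whiskerRight_app, ← Functor.map_comp,
    (Under.mkIdInitial (X := d)).hom_ext (_ ≫ _) (𝟙 _), (underLift hf d).map_id]

theorem inverseMap_comp {d d' d'' : D} (u : d ⟶ d') (u' : d' ⟶ d'') :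
    inverseMap hf (u ≫ u') = inverseMap hf u ≫ inverseMap hf u' := by
  have hcocycle := congr_app (mapCompUnderLiftIso_hom_comp hf u u') (Under.mk (𝟙 d''))
  have hnat := (mapCompUnderLiftIso hf u).hom.naturality
    (Under.homMk u' : Under.mk (𝟙 d') ⟶ (Under.map u').obj (Under.mk (𝟙 d'')))
  have hinit : (Under.homMk (u ≫ u') :
      Under.mk (𝟙 d) ⟶ (Under.map (u ≫ u')).obj (Under.mk (𝟙 d''))) =
      (Under.homMk u : Under.mk (𝟙 d) ⟶ (Under.map u).obj (Under.mk (𝟙 d'))) ≫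
        (Under.map u).map
          (Under.homMk u' : Under.mk (𝟙 d') ⟶ (Under.map u').obj (Under.mk (𝟙 d''))) ≫
        (Under.mapComp u u').inv.app _ :=
    Under.mkIdInitial.hom_ext _ _
  simp only [NatTrans.comp_app, whiskerLeft_app, whiskerRight_app] at hcocycle
  erw [inverseMap, hinit, (underLift hf d).map_comp, (underLift hf d).map_comp, Category.assoc,
    Category.assoc, ← hcocycle, inverseMap, inverseMap, Category.assoc, ← reassoc_of% hnat]

noncomputable def inverse : D ⥤ W_C.Localization where
  obj d := (underLift hf d).obj (Under.mk (𝟙 d))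
  map := inverseMap hf
  map_id := inverseMap_id hf
  map_comp := inverseMap_comp hf

theorem inverse_inverts : W_D.IsInvertedBy (inverse hf) := fun d _ u hu => by
  have := underLift_inverts hf d
    (Under.homMk u : Under.mk (𝟙 d) ⟶ (Under.map u).obj (Under.mk (𝟙 _))) hu
  dsimp [inverse, inverseMap]
  infer_instance

noncomputable def compInverseIso : f ⋙ inverse hf ≅ W_C.Q :=
  NatIso.ofComponents
    (fun c => (sliceFunctorCompUnderLiftIso hf (f.obj c)).app (StructuredArrow.mk (𝟙 (f.obj c))))
    (fun {c c'} v => by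
      have hδ := mapCompUnderLiftIso_hom_app hf (f.map v) (StructuredArrow.mk (𝟙 (f.obj c')))
      have hnat := (sliceFunctorCompUnderLiftIso hf (f.obj c)).hom.naturality
        (StructuredArrow.homMk v : StructuredArrow.mk (𝟙 (f.obj c)) ⟶
          (StructuredArrow.map (f.map v)).obj (StructuredArrow.mk (𝟙 (f.obj c'))))
      change inverseMap hf (f.map v) ≫ _ = _
      erw [inverseMap, Category.assoc, hδ, Category.assoc, Iso.inv_hom_id_app, Category.comp_id]
      exact hnat)

variable (W_D) in
theorem underMark_isInvertedBy_forget_comp_Q (d : D) :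
    (underMark W_D d).IsInvertedBy (Under.forget d ⋙ W_D.Q) :=
  fun _ _ φ hφ => Localization.inverts W_D.Q W_D φ.right hφ

noncomputable def underLiftCompLocalizedIso (d : D) :
    underLift hf d ⋙ localized hf ≅ Under.forget d ⋙ W_D.Q :=
  extendIso (sliceMark W_C f d)
    (Localization.fac _ (sliceFunctor_inverts f W_C W_D hf d) (sliceMark W_C f d).Q)
    ((underLift_inverts hf d).of_comp _ _ _)
    (underMark_isInvertedBy_forget_comp_Q W_D d)
    (isoWhiskerRight (sliceFunctorCompUnderLiftIso hf d) (localized hf) ≪≫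
      isoWhiskerLeft (StructuredArrow.proj d f) (Localization.fac _ _ _))

theorem underLiftCompLocalizedIso_hom_app (d : D) (x : StructuredArrow d f) :
    (underLiftCompLocalizedIso hf d).hom.app ((sliceFunctor f d).obj x) =
      (localized hf).map ((sliceFunctorCompUnderLiftIso hf d).hom.app x) ≫
        (Localization.fac _ (comp_Q_inverts f W_C W_D hf) W_C.Q).hom.app x.right := by
  unfold underLiftCompLocalizedIso
  exact extendIso_hom_app _ _ _ _ _ x

theorem mapCompUnderLiftIso_hom_localized_comp {d d' : D} (u : d ⟶ d') :
    whiskerRight (mapCompUnderLiftIso hf u).hom (localized hf) ≫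
        (underLiftCompLocalizedIso hf d').hom =
      whiskerLeft (Under.map u) (underLiftCompLocalizedIso hf d).hom := by
  apply natTrans_ext_of_restrict (sliceMark W_C f d')
    (Localization.fac _ (sliceFunctor_inverts f W_C W_D hf d') (sliceMark W_C f d').Q)
    ((map_comp_underLift_inverts hf u).of_comp _ _ _)
    (underMark_isInvertedBy_forget_comp_Q W_D d')
  intro x
  simp only [NatTrans.comp_app, whiskerRight_app, whiskerLeft_app]
  erw [mapCompUnderLiftIso_hom_app, underLiftCompLocalizedIso_hom_app,
    underLiftCompLocalizedIso_hom_app hf d ((StructuredArrow.map u).obj x)]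
  erw [← Category.assoc, ← (localized hf).map_comp, Category.assoc, Iso.inv_hom_id_app,
    Category.comp_id]
  rfl

noncomputable def inverseCompIso : inverse hf ⋙ localized hf ≅ W_D.Q :=
  NatIso.ofComponents (fun d => (underLiftCompLocalizedIso hf d).app (Under.mk (𝟙 d)))
    (fun {d d'} u => by
      have hcompat := congr_app (mapCompUnderLiftIso_hom_localized_comp hf u) (Under.mk (𝟙 d'))
      have hnat := (underLiftCompLocalizedIso hf d).hom.naturality
        (Under.homMk u : Under.mk (𝟙 d) ⟶ (Under.map u).obj (Under.mk (𝟙 d')))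
      simp only [NatTrans.comp_app, whiskerRight_app, whiskerLeft_app] at hcompat
      change (localized hf).map (inverseMap hf u) ≫ _ = _
      erw [inverseMap, (localized hf).map_comp, Category.assoc, hcompat]
      exact hnat)

end MarkedQuillenA

theorem theoremA_marked_localizations_general
    (f : C ⥤ D) (W_C : MorphismProperty C) (W_D : MorphismProperty D)
    (hf : ∀ {a b : C} (g : a ⟶ b), W_C g → W_D (f.map g))
    (h : ∀ d : D,
      (Localization.lift (sliceFunctor f d ⋙ (underMark W_D d).Q)
        (sliceFunctor_inverts f W_C W_D hf d) (sliceMark W_C f d).Q).IsEquivalence) :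
    (Localization.lift (f ⋙ W_D.Q) (comp_Q_inverts f W_C W_D hf) W_C.Q).IsEquivalence :=
  Localization.isEquivalence W_C.Q W_C W_D.Q W_D (f ⋙ W_D.Q) _ (MarkedQuillenA.inverse hf)
    (Localization.lift _ (MarkedQuillenA.inverse_inverts hf) W_D.Q)
    (Functor.isoWhiskerLeft f (Localization.fac _ _ _) ≪≫ MarkedQuillenA.compInverseIso hf)
    (MarkedQuillenA.inverseCompIso hf)

/-- Quillen's Theorem A for localizations of marked categories: if, for every `d : D`,
the canonical functor `d ↓ f ⥤ d/D` induces an equivalence on localizations (at the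
markings induced by `W_C` and `W_D`), then `f` induces an equivalence
`L_{W_C} C ≌ L_{W_D} D` on localizations. -/
theorem theoremA_marked_localizations
    (f : C ⥤ D) (W_C : MorphismProperty C) (W_D : MorphismProperty D)
    [W_C.ContainsIdentities] [W_D.ContainsIdentities]
    (hf : ∀ {a b : C} (g : a ⟶ b), W_C g → W_D (f.map g))
    (h : ∀ d : D,
      (Localization.lift (sliceFunctor f d ⋙ (underMark W_D d).Q)
        (sliceFunctor_inverts f W_C W_D hf d) (sliceMark W_C f d).Q).IsEquivalence) :
    (Localization.lift (f ⋙ W_D.Q) (comp_Q_inverts f W_C W_D hf) W_C.Q).IsEquivalence :=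
  theoremA_marked_localizations_general f W_C W_D hf h
end

section
/- Let F : C ⥤ Cat and let ∫F be its Grothendieck construction. For any category X, functors ∫F ⥤ X correspond naturally (by an isomorphism of categories) to lax cocones under F with vertex X: families of functors α_c : F(c) ⥤ X together with natural transformations θ_f : α_c ⟶ α_{c'} ∘ F(f) for each f : c → c', satisfying unitality (θ_{id} = id) and the cocycle/composability condition θ_{g∘f} = (θ_g ∗ F(f)) ∘ θ_f. -/
/-!
A functor `G : ∫F ⥤ X` restricts along the fibre inclusions `ι c : F c ⥤ ∫F` and the canonical
transformations `ιNatTrans f : ι c ⟶ F f ⋙ ι c'` to a lax cocone; unitality and the cocycle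
condition are the images under `G` of the corresponding identities for `ιNatTrans`. Since every
morphism `(f, φ)` of `∫F` factors as `(ιNatTrans f).app d ≫ (ι c').map φ`, `functorFrom` rebuilds
`G` from this lax cocone. Conversely a lax cocone is recovered from its functor: its components
are `ι c ⋙ -` and its transformations are the images of `ιNatTrans f`.
-/

open CategoryTheory

universe v u v₂ u₂

variable {C : Type u} [Category.{v} C]

/-- A lax cocone under `F : C ⥤ Cat` with vertex `X`: functors `α_c : F c ⥤ X` together
with natural transformations `θ_f : α_c ⟶ F f ⋙ α_c'` satisfying unitality and the
cocycle condition. -/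
structure LaxCocone (F : C ⥤ Cat.{v₂, u₂}) (X : Type u₂) [Category.{v₂} X] where
  fib : ∀ c : C, F.obj c ⥤ X
  hom : ∀ {c c' : C} (f : c ⟶ c'), fib c ⟶ (F.map f).toFunctor ⋙ fib c'
  hom_id : ∀ c : C, hom (𝟙 c) =
    eqToHom (show fib c = (F.map (𝟙 c)).toFunctor ⋙ fib c by rw [CategoryTheory.Functor.map_id]; rfl)
  hom_comp : ∀ (c₁ c₂ c₃ : C) (f : c₁ ⟶ c₂) (g : c₂ ⟶ c₃), hom (f ≫ g) =
    hom f ≫ Functor.whiskerLeft (F.map f).toFunctor (hom g) ≫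
      eqToHom (show (F.map f).toFunctor ⋙ ((F.map g).toFunctor ⋙ fib c₃) = (F.map (f ≫ g)).toFunctor ⋙ fib c₃ by
        rw [CategoryTheory.Functor.map_comp]; rfl)

/-- The functor `∫F ⥤ X` associated to a lax cocone under `F` with vertex `X`. -/
def LaxCocone.toFunctor {F : C ⥤ Cat.{v₂, u₂}} {X : Type u₂} [Category.{v₂} X]
    (L : LaxCocone F X) : Grothendieck F ⥤ X :=
  Grothendieck.functorFrom L.fib L.hom L.hom_id L.hom_comp

namespace CategoryTheory.Grothendieck

variable {F : C ⥤ Cat.{v₂, u₂}}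

lemma ιNatTrans_id_app (c : C) (d : F.obj c) :
    (ιNatTrans (𝟙 c)).app d = eqToHom (show (⟨c, d⟩ : Grothendieck F) =
      ⟨c, (F.map (𝟙 c)).toFunctor.obj d⟩ by simp) := by
  rw [eqToHom_eq]
  apply Grothendieck.ext _ _ rfl
  dsimp
  erw [Category.id_comp]

/- The fibre components below live over bases such as `((ι F c).obj d).base`, which are only
definitionally `c`; this is why the rewrites go through `erw`. -/
lemma ιNatTrans_comp_app {c₁ c₂ c₃ : C} (f : c₁ ⟶ c₂) (g : c₂ ⟶ c₃) (d : F.obj c₁) :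
    (ιNatTrans (f ≫ g)).app d =
      (ιNatTrans f).app d ≫ (ιNatTrans g).app ((F.map f).toFunctor.obj d) ≫
        eqToHom (show ((F.map g).toFunctor ⋙ ι F c₃).obj ((F.map f).toFunctor.obj d) =
          ⟨c₃, (F.map (f ≫ g)).toFunctor.obj d⟩ by simp) := by
  rw [eqToHom_eq]
  fapply Grothendieck.ext
  · exact congrArg (f ≫ ·) (Category.comp_id g).symm
  · dsimp only [ι_obj, ι_map, ιNatTrans_app_base, ιNatTrans_app_fiber, comp_fiber, comp_base,
      Functor.comp_obj]
    erw [Functor.map_id (F.map _).toFunctor, Functor.map_id (F.map _).toFunctor, Category.id_comp,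
      Category.id_comp, Category.comp_id (eqToHom _), eqToHom_trans, eqToHom_trans]
    rfl

lemma ιNatTrans_app_comp_ι_map_fiber {x y : Grothendieck F} (f : x ⟶ y) :
    (ιNatTrans f.base).app x.fiber ≫ (ι F y.base).map f.fiber = f := by
  apply Grothendieck.ext _ _ (Category.comp_id _)
  dsimp only [ι_obj, ι_map, ιNatTrans_app_base, ιNatTrans_app_fiber, comp_fiber, comp_base]
  erw [Functor.map_id (F.map _).toFunctor, Category.id_comp, eqToHom_trans_assoc,
    eqToHom_trans_assoc]
  exact Category.id_comp _

section FunctorFrom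

variable {E : Type*} [Category E] (fib : ∀ c, F.obj c ⥤ E)
  (hom : ∀ {c c' : C} (f : c ⟶ c'), fib c ⟶ (F.map f).toFunctor ⋙ fib c')
  (hom_id : ∀ c, hom (𝟙 c) = eqToHom (by simp only [Functor.map_id]; rfl))
  (hom_comp : ∀ c₁ c₂ c₃ (f : c₁ ⟶ c₂) (g : c₂ ⟶ c₃), hom (f ≫ g) =
    hom f ≫ Functor.whiskerLeft (F.map f).toFunctor (hom g) ≫
      eqToHom (by simp only [Functor.map_comp]; rfl))

lemma ι_comp_functorFrom (c : C) : ι F c ⋙ functorFrom fib hom hom_id hom_comp = fib c :=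
  Functor.ext_of_iso (ιCompFunctorFrom fib hom hom_id hom_comp c) (fun _ => rfl) (fun _ => rfl)

lemma functorFrom_map_ιNatTrans_app {c c' : C} (f : c ⟶ c') (d : F.obj c) :
    (functorFrom fib hom hom_id hom_comp).map ((ιNatTrans f).app d) = (hom f).app d := by
  simp only [functorFrom_map, ιNatTrans_app_fiber]
  erw [Functor.map_id, Category.comp_id]
  rfl

end FunctorFrom

end CategoryTheory.Grothendieck

namespace LaxCocone

variable {F : C ⥤ Cat.{v₂, u₂}} {X : Type u₂} [Category.{v₂} X]

lemma toFunctor_injective : Function.Injective (toFunctor : LaxCocone F X → _) := by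
  intro L₁ L₂ h
  have h_fib : L₁.fib = L₂.fib := funext fun c => by
    simpa only [toFunctor, Grothendieck.ι_comp_functorFrom] using
      congrArg (Grothendieck.ι F c ⋙ ·) h
  obtain ⟨fib, hom₁, _, _⟩ := L₁
  obtain ⟨_, hom₂, _, _⟩ := L₂
  subst h_fib
  obtain rfl : @hom₁ = @hom₂ := by
    funext c c' f
    ext d
    have h_map := Functor.congr_hom h ((Grothendieck.ιNatTrans f).app d)
    simp only [toFunctor, Grothendieck.functorFrom_map_ιNatTrans_app] at h_map
    erw [eqToHom_refl, eqToHom_refl, Category.id_comp, Category.comp_id] at h_map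
    exact h_map
  rfl

def ofFunctor (G : Grothendieck F ⥤ X) : LaxCocone F X where
  fib c := Grothendieck.ι F c ⋙ G
  hom f := Functor.whiskerRight (Grothendieck.ιNatTrans f) G
  hom_id c := by
    ext d
    simp only [Functor.whiskerRight_app, Grothendieck.ιNatTrans_id_app, eqToHom_app]
    exact eqToHom_map G _
  hom_comp c₁ c₂ c₃ f g := by
    ext d
    simp only [Functor.whiskerRight_app, Grothendieck.ιNatTrans_comp_app, NatTrans.comp_app,
      Functor.whiskerLeft_app, eqToHom_app]
    exact (G.map_comp _ _).trans (congrArg (G.map _ ≫ ·)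
      ((G.map_comp _ _).trans (congrArg (G.map _ ≫ ·) (eqToHom_map G _))))

lemma toFunctor_ofFunctor (G : Grothendieck F ⥤ X) : (ofFunctor G).toFunctor = G :=
  CategoryTheory.Functor.ext (fun _ => rfl) fun _ _ f => by
    conv_rhs => rw [← Grothendieck.ιNatTrans_app_comp_ι_map_fiber f]
    simp only [toFunctor, ofFunctor, Grothendieck.functorFrom_map, Functor.whiskerRight_app,
      Functor.comp_map]
    exact ((G.map_comp _ _).symm.trans (Category.comp_id _).symm).trans (Category.id_comp _).symm

end LaxCocone

/-- Functors out of the Grothendieck construction `∫F` correspond bijectively to lax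
cocones under `F`: the assignment sending a lax cocone to its associated functor
`∫F ⥤ X` is a bijection. -/
theorem grothendieck_functors_equiv_laxCocones
    (F : C ⥤ Cat.{v₂, u₂}) (X : Type u₂) [Category.{v₂} X] :
    Function.Bijective
      (LaxCocone.toFunctor : LaxCocone F X → (Grothendieck F ⥤ X)) :=
  ⟨LaxCocone.toFunctor_injective, fun G => ⟨LaxCocone.ofFunctor G, LaxCocone.toFunctor_ofFunctor G⟩⟩
end
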